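/- arXiv:0912.3227 — 7 statements merged into one kernel-verified Lean document; each statement's English description precedes it below -/
import Mathlib

section
/- For every positive integer p ≥ 2 and every real r > 0, ∑_{n=1}^∞ 1/(n^p (n+r)) = ∑_{k=1}^{p-1} (-1)^(k-1) ζ(p-k+1)/r^k + (-1)^(p-1) (ψ(r+1) + γ)/r^p. -/
open scoped BigOperators
open Finset

/-- Polylogarithm Li_p(x) = ∑_{k≥1} x^k / k^p. -/
noncomputable def Li (p : ℕ) (x : ℝ) : ℝ := ∑' k : ℕ, x ^ (k + 1) / ((k : ℝ) + 1) ^ p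

/-- Riemann zeta at a natural argument, as a series. -/
noncomputable def zetaS (s : ℕ) : ℝ := ∑' n : ℕ, 1 / ((n : ℝ) + 1) ^ s

/-- Generalized harmonic number H_n^{(p)}. -/
noncomputable def H (n p : ℕ) : ℝ := ∑ j ∈ Finset.Icc 1 n, 1 / (j : ℝ) ^ p

/-- Digamma function: logarithmic derivative of Gamma. -/
noncomputable def digamma (x : ℝ) : ℝ := deriv (fun y : ℝ => Real.log (Real.Gamma y)) x

open Filter Topology

lemma summable_shift_pow (s : ℕ) (hs : 2 ≤ s) :
    Summable (fun n : ℕ => 1 / ((n : ℝ) + 1) ^ s) := by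
  have h : Summable (fun n : ℕ => 1 / (n : ℝ) ^ s) := Real.summable_one_div_nat_pow.mpr (by omega)
  have := (summable_nat_add_iff 1).mpr h
  simpa using this

lemma summable_main (q : ℕ) (hq : 1 ≤ q) (r : ℝ) (hr : 0 < r) :
    Summable (fun n : ℕ => 1 / (((n : ℝ) + 1) ^ q * (((n : ℝ) + 1) + r))) := by
  refine Summable.of_nonneg_of_le (fun n => by positivity) (fun n => ?_)
    (summable_shift_pow 2 le_rfl)
  have hn : (0:ℝ) ≤ (n:ℝ) := n.cast_nonneg
  have h1 : ((n:ℝ) + 1) ≤ ((n:ℝ) + 1) ^ q := le_self_pow₀ (by linarith) (by omega)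
  have h2 : ((n:ℝ) + 1) ^ 2 ≤ ((n:ℝ) + 1) ^ q * (((n:ℝ) + 1) + r) := by
    rw [sq]
    exact mul_le_mul h1 (by linarith) (by linarith) (by positivity)
  exact one_div_le_one_div_of_le (by positivity) h2

lemma tendsto_log_add_sub_log (c : ℝ) (hc : 0 ≤ c) :
    Tendsto (fun x : ℝ => Real.log (x + c) - Real.log x) atTop (𝓝 0) := by
  have h : Tendsto (fun x : ℝ => Real.log (1 + c / x)) atTop (𝓝 0) := by
    have h1 : Tendsto (fun x : ℝ => 1 + c / x) atTop (𝓝 (1 + 0)) :=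
      tendsto_const_nhds.add (tendsto_const_nhds.div_atTop tendsto_id)
    rw [add_zero] at h1
    have h2 := ((Real.continuousAt_log one_ne_zero).tendsto).comp h1
    simpa [Function.comp_def] using h2
  apply h.congr'
  filter_upwards [eventually_gt_atTop 0] with x hx
  rw [← Real.log_div (by positivity : (0:ℝ) < x + c).ne' hx.ne']
  congr 1
  rw [add_div, div_self hx.ne']

lemma summable_diff (r : ℝ) (hr : 0 < r) :
    Summable (fun k : ℕ => 1 / ((k : ℝ) + 1) - 1 / (((k : ℝ) + 1) + r)) := by
  have hb : Summable (fun k : ℕ => r * (1 / ((k : ℝ) + 1) ^ 2)) :=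
    (summable_shift_pow 2 le_rfl).mul_left r
  refine hb.of_nonneg_of_le (fun k => ?_) (fun k => ?_)
  · have hk : (0:ℝ) < (k:ℝ) + 1 := by positivity
    have : 1 / (((k:ℝ) + 1) + r) ≤ 1 / ((k:ℝ) + 1) :=
      one_div_le_one_div_of_le hk (by linarith)
    linarith
  · have hk : (0:ℝ) < (k:ℝ) + 1 := by positivity
    have hk2 : (0:ℝ) < ((k:ℝ) + 1) + r := by linarith
    have h1 : 1 / ((k:ℝ) + 1) - 1 / (((k:ℝ) + 1) + r)
        = r / (((k:ℝ) + 1) * (((k:ℝ) + 1) + r)) := by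
      field_simp
      ring
    rw [h1, mul_one_div]
    apply div_le_div_of_nonneg_left hr.le (by positivity)
    rw [sq]
    exact mul_le_mul_of_nonneg_left (by linarith) hk.le

lemma digamma_series (r : ℝ) (hr : 0 < r) :
    digamma (r + 1) + Real.eulerMascheroniConstant
      = ∑' k : ℕ, (1 / ((k : ℝ) + 1) - 1 / (((k : ℝ) + 1) + r)) := by
  set f : ℝ → ℝ := fun y => Real.log (Real.Gamma y) with hf
  have hc : ConvexOn ℝ (Set.Ioi 0) f := by
    simpa [hf, Function.comp_def] using Real.convexOn_log_Gamma
  have h_rec : ∀ x : ℝ, 0 < x → f (x + 1) = f x + Real.log x := by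
    intro x hx
    simp only [hf]
    rw [Real.Gamma_add_one hx.ne', Real.log_mul hx.ne' (Real.Gamma_pos_of_pos hx).ne']
    exact add_comm _ _
  have hder : ∀ {x : ℝ}, 0 < x → DifferentiableAt ℝ f x := by
    intro x hx
    have h1 : ∀ m : ℕ, x ≠ -(m:ℝ) := by
      intro m
      have : (0:ℝ) ≤ (m:ℝ) := m.cast_nonneg
      intro h; rw [h] at hx; linarith
    exact (Real.differentiableAt_Gamma h1).log (Real.Gamma_ne_zero h1)
  have hder_rec : ∀ x : ℝ, 0 < x → deriv f (x + 1) = deriv f x + 1 / x := by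
    intro x hx
    rw [← deriv_comp_add_const, one_div, ← Real.deriv_log,
      ← deriv_fun_add (hder hx) (Real.differentiableAt_log hx.ne')]
    apply Filter.EventuallyEq.deriv_eq
    filter_upwards [eventually_gt_nhds hx] with y hy
    exact h_rec y hy
  have hT : ∀ N : ℕ, deriv f (r + 1 + N)
      = deriv f (r + 1) + ∑ k ∈ Finset.range N, 1 / (r + 1 + (k:ℝ)) := by
    intro N
    induction N with
    | zero => simp
    | succ n ih =>
      have hpos : 0 < r + 1 + (n:ℝ) := by positivity
      have he : r + 1 + ((n:ℕ) + 1 : ℕ) = (r + 1 + (n:ℝ)) + 1 := by push_cast; ring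
      rw [he, hder_rec _ hpos, ih, Finset.sum_range_succ]
      ring
  have hLB : ∀ x : ℝ, 0 < x → Real.log x ≤ deriv f (x + 1) := by
    intro x hx
    refine (le_of_eq ?_).trans (hc.slope_le_deriv (Set.mem_Ioi.mpr hx)
      (Set.mem_Ioi.mpr (by linarith)) (by linarith) (hder (by linarith)))
    rw [slope_def_field, show x + 1 - x = (1:ℝ) by ring, div_one, h_rec x hx,
      add_sub_cancel_left]
  have hUB : ∀ x : ℝ, 0 < x → deriv f (x + 1) ≤ Real.log (x + 1) := by
    intro x hx
    refine (hc.deriv_le_slope (Set.mem_Ioi.mpr (by linarith : (0:ℝ) < x + 1))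
      (Set.mem_Ioi.mpr (by linarith : (0:ℝ) < x + 2)) (by linarith)
      (hder (by linarith))).trans (le_of_eq ?_)
    rw [slope_def_field, show x + 2 - (x + 1) = (1:ℝ) by ring, div_one,
      show x + 2 = (x + 1) + 1 by ring, h_rec (x + 1) (by linarith), add_sub_cancel_left]
  have hgsum := summable_diff r hr
  set L : ℝ := ∑' k : ℕ, (1 / ((k : ℝ) + 1) - 1 / (((k : ℝ) + 1) + r)) with hL
  have t1 : Filter.Tendsto (fun N : ℕ => Real.log (r + (N:ℝ)) - Real.log (N:ℝ))
      Filter.atTop (𝓝 0) := by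
    have h := (tendsto_log_add_sub_log r hr.le).comp tendsto_natCast_atTop_atTop
    refine h.congr fun n => ?_
    simp only [Function.comp_apply]
    rw [add_comm]
  have t2 := Real.tendsto_harmonic_sub_log
  have t3 : Filter.Tendsto
      (fun N : ℕ => ∑ k ∈ Finset.range N, (1 / ((k:ℝ) + 1) - 1 / (((k:ℝ) + 1) + r)))
      Filter.atTop (𝓝 L) := hgsum.hasSum.tendsto_sum_nat
  have key : ∀ N : ℕ, Real.log (r + (N:ℝ)) - ∑ k ∈ Finset.range N, 1 / (r + 1 + (k:ℝ))
      = (Real.log (r + (N:ℝ)) - Real.log (N:ℝ)) - ((harmonic N : ℝ) - Real.log (N:ℝ))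
        + ∑ k ∈ Finset.range N, (1 / ((k:ℝ) + 1) - 1 / (((k:ℝ) + 1) + r)) := by
    intro N
    rw [Finset.sum_sub_distrib]
    have hh : (harmonic N : ℝ) = ∑ k ∈ Finset.range N, 1 / ((k:ℝ) + 1) := by
      rw [harmonic]
      push_cast
      simp [one_div]
    have he : ∑ k ∈ Finset.range N, 1 / (((k:ℝ) + 1) + r)
        = ∑ k ∈ Finset.range N, 1 / (r + 1 + (k:ℝ)) :=
      Finset.sum_congr rfl fun k _ => by ring_nf
    rw [hh, he]
    ring
  have ha : Filter.Tendsto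
      (fun N : ℕ => Real.log (r + (N:ℝ)) - ∑ k ∈ Finset.range N, 1 / (r + 1 + (k:ℝ)))
      Filter.atTop (𝓝 (0 - Real.eulerMascheroniConstant + L)) :=
    ((t1.sub t2).add t3).congr fun N => (key N).symm
  have t4 : Filter.Tendsto
      (fun N : ℕ => Real.log (r + (N:ℝ) + 1) - Real.log (r + (N:ℝ)))
      Filter.atTop (𝓝 0) := by
    have h5 : Filter.Tendsto (fun N : ℕ => r + (N:ℝ)) Filter.atTop Filter.atTop :=
      Filter.tendsto_atTop_add_const_left _ r tendsto_natCast_atTop_atTop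
    have h := (tendsto_log_add_sub_log 1 zero_le_one).comp h5
    exact h.congr fun n => rfl
  have hb : Filter.Tendsto
      (fun N : ℕ => Real.log (r + (N:ℝ) + 1) - ∑ k ∈ Finset.range N, 1 / (r + 1 + (k:ℝ)))
      Filter.atTop (𝓝 (0 + (0 - Real.eulerMascheroniConstant + L))) :=
    (t4.add ha).congr fun N => by ring
  have hbound : ∀ N : ℕ,
      Real.log (r + (N:ℝ)) - ∑ k ∈ Finset.range N, 1 / (r + 1 + (k:ℝ)) ≤ deriv f (r + 1)
      ∧ deriv f (r + 1) ≤ Real.log (r + (N:ℝ) + 1)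
          - ∑ k ∈ Finset.range N, 1 / (r + 1 + (k:ℝ)) := by
    intro N
    have h1 := hLB (r + (N:ℝ)) (by positivity)
    have h2 := hUB (r + (N:ℝ)) (by positivity)
    have e : deriv f (r + (N:ℝ) + 1)
        = deriv f (r + 1) + ∑ k ∈ Finset.range N, 1 / (r + 1 + (k:ℝ)) := by
      rw [show r + (N:ℝ) + 1 = r + 1 + (N:ℝ) by ring, hT N]
    rw [e] at h1 h2
    constructor <;> linarith
  rw [zero_add] at hb
  have hfinal : deriv f (r + 1) = 0 - Real.eulerMascheroniConstant + L := by
    apply le_antisymm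
    · refine ge_of_tendsto hb ?_
      filter_upwards with N using (hbound N).2
    · refine le_of_tendsto ha ?_
      filter_upwards with N using (hbound N).1
  have : digamma (r + 1) = deriv f (r + 1) := rfl
  rw [this, hfinal]
  ring

lemma base_case (r : ℝ) (hr : 0 < r) :
    ∑' n : ℕ, 1 / (((n : ℝ) + 1) * (((n : ℝ) + 1) + r))
      = (digamma (r + 1) + Real.eulerMascheroniConstant) / r := by
  rw [digamma_series r hr]
  have h : ∀ k : ℕ, 1 / ((k : ℝ) + 1) - 1 / (((k : ℝ) + 1) + r)
      = r * (1 / (((k : ℝ) + 1) * (((k : ℝ) + 1) + r))) := by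
    intro k
    have h1 : (0:ℝ) < (k:ℝ) + 1 := by positivity
    have h2 : (0:ℝ) < ((k:ℝ) + 1) + r := by linarith
    field_simp
    ring
  rw [tsum_congr h, tsum_mul_left, mul_div_cancel_left₀ _ hr.ne']

lemma step_lemma (r : ℝ) (hr : 0 < r) (q : ℕ) (hq : 1 ≤ q) :
    ∑' n : ℕ, 1 / (((n : ℝ) + 1) ^ (q + 1) * (((n : ℝ) + 1) + r))
      = zetaS (q + 1) / r
        - (∑' n : ℕ, 1 / (((n : ℝ) + 1) ^ q * (((n : ℝ) + 1) + r))) / r := by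
  have hz : Summable (fun n : ℕ => 1 / ((n : ℝ) + 1) ^ (q + 1)) :=
    summable_shift_pow (q + 1) (by omega)
  have hs := summable_main q hq r hr
  have hterm : ∀ n : ℕ, 1 / (((n : ℝ) + 1) ^ (q + 1) * (((n : ℝ) + 1) + r))
      = (1 / r) * (1 / ((n : ℝ) + 1) ^ (q + 1))
        - (1 / r) * (1 / (((n : ℝ) + 1) ^ q * (((n : ℝ) + 1) + r))) := by
    intro n
    have h1 : (0:ℝ) < (n:ℝ) + 1 := by positivity
    have h2 : (0:ℝ) < ((n:ℝ) + 1) + r := by linarith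
    have h3 : ((n:ℝ) + 1) ^ q ≠ 0 := by positivity
    rw [pow_succ]
    field_simp
    ring
  rw [tsum_congr hterm, Summable.tsum_sub (hz.mul_left _) (hs.mul_left _), tsum_mul_left, tsum_mul_left,
    zetaS]
  ring

lemma claim_lemma (r : ℝ) (hr : 0 < r) (q : ℕ) :
    ∑' n : ℕ, 1 / (((n : ℝ) + 1) ^ (q + 1) * (((n : ℝ) + 1) + r))
      = (∑ k ∈ Finset.range q, (-1 : ℝ) ^ k * zetaS (q + 1 - k) / r ^ (k + 1))
        + (-1 : ℝ) ^ q
          * (∑' n : ℕ, 1 / (((n : ℝ) + 1) * (((n : ℝ) + 1) + r))) / r ^ q := by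
  induction q with
  | zero => simp
  | succ q ih =>
    rw [step_lemma r hr (q + 1) (by omega), ih, Finset.sum_range_succ']
    have hsum : ∑ k ∈ Finset.range q,
        (-1 : ℝ) ^ (k + 1) * zetaS (q + 1 + 1 - (k + 1)) / r ^ (k + 1 + 1)
        = -∑ k ∈ Finset.range q,
            (-1 : ℝ) ^ k * zetaS (q + 1 - k) / r ^ (k + 1) / r := by
      rw [← Finset.sum_neg_distrib]
      refine Finset.sum_congr rfl fun k hk => ?_
      have h1 : q + 1 + 1 - (k + 1) = q + 1 - k := by omega
      rw [h1]
      ring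
    rw [hsum]
    set A := ∑ k ∈ Finset.range q, (-1 : ℝ) ^ k * zetaS (q + 1 - k) / r ^ (k + 1) / r with hA
    set S := ∑' n : ℕ, 1 / (((n : ℝ) + 1) * (((n : ℝ) + 1) + r)) with hS
    have hA2 : ∑ k ∈ Finset.range q, (-1 : ℝ) ^ k * zetaS (q + 1 - k) / r ^ (k + 1) = A * r := by
      rw [hA, Finset.sum_mul]
      exact Finset.sum_congr rfl fun k hk => by
        rw [div_mul_cancel₀ _ hr.ne']
    rw [hA2]
    simp only [pow_zero, one_mul, Nat.sub_zero, pow_one, pow_succ]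
    field_simp
    ring

theorem stmt2 (p : ℕ) (hp : 2 ≤ p) (r : ℝ) (hr : 0 < r) :
    ∑' n : ℕ, 1 / (((n : ℝ) + 1) ^ p * (((n : ℝ) + 1) + r))
      = (∑ k ∈ Finset.Icc 1 (p - 1), (-1 : ℝ) ^ (k - 1) * zetaS (p - k + 1) / r ^ k)
        + (-1 : ℝ) ^ (p - 1) * (digamma (r + 1) + Real.eulerMascheroniConstant) / r ^ p := by
  obtain ⟨q, hq1, rfl⟩ : ∃ q, 1 ≤ q ∧ p = q + 1 := ⟨p - 1, by omega, by omega⟩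
  rw [claim_lemma r hr q, base_case r hr]
  rw [← Finset.Ico_add_one_right_eq_Icc, Finset.sum_Ico_eq_sum_range]
  simp only [Nat.add_sub_cancel]
  congr 1
  · refine Finset.sum_congr rfl fun i hi => ?_
    simp only [Finset.mem_range] at hi
    have h1 : 1 + i - 1 = i := by omega
    have h2 : q + 1 - (1 + i) + 1 = q + 1 - i := by omega
    rw [h1, h2, add_comm 1 i]
  · rw [pow_succ]
    ring
end

section
/- For positive integers p ≥ 2 and m, ∫₀¹ x^(m-1) Li_p(x) dx = ∑_{k=1}^{p-1} (-1)^(k-1) ζ(p-k+1)/m^k + (-1)^(p-1) H_m / m^p. -/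
open scoped BigOperators
open Finset

lemma teleA (c : ℝ) (hc : 0 < c) :
    HasSum (fun n : ℕ => 1/((n:ℝ)+c) - 1/((n:ℝ)+1+c)) (1/c) := by
  rw [hasSum_iff_tendsto_nat_of_nonneg]
  · have heq : ∀ N : ℕ, ∑ n ∈ Finset.range N, (1/((n:ℝ)+c) - 1/((n:ℝ)+1+c))
        = 1/c - 1/((N:ℝ)+c) := by
      intro N
      have := Finset.sum_range_sub' (fun n : ℕ => 1/((n:ℝ)+c)) N
      push_cast at this
      simpa using this
    simp only [heq]
    have h0 : Filter.Tendsto (fun N : ℕ => 1/((N:ℝ)+c)) Filter.atTop (nhds 0) := by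
      have := Filter.Tendsto.comp tendsto_inv_atTop_zero
        (Filter.tendsto_atTop_add_const_right Filter.atTop c tendsto_natCast_atTop_atTop)
      simpa [one_div, Function.comp_def] using this
    simpa using (tendsto_const_nhds.sub h0)
  · intro n
    have h1 : (0:ℝ) < (n:ℝ) + c := by positivity
    rw [sub_nonneg]
    apply one_div_le_one_div_of_le h1; linarith


lemma teleB (m : ℕ) :
    HasSum (fun n : ℕ => 1/((n:ℝ)+1) - 1/((n:ℝ)+1+m)) (H m 1) := by
  have hval : H m 1 = ∑ i ∈ Finset.range m, 1/((i:ℝ)+1) := by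
    rw [H, ← Finset.Ico_add_one_right_eq_Icc, Finset.sum_Ico_eq_sum_range]
    simp [add_comm]
  rw [hval]
  have hs : HasSum (fun n : ℕ => ∑ i ∈ Finset.range m,
      (1/((n:ℝ)+(i+1)) - 1/((n:ℝ)+1+(i+1)))) (∑ i ∈ Finset.range m, 1/((i:ℝ)+1)) := by
    apply hasSum_sum
    intro i _
    exact teleA ((i:ℝ)+1) (by positivity)
  convert hs using 2 with n
  have := Finset.sum_range_sub' (fun i : ℕ => 1/((n:ℝ)+(i+1))) m
  push_cast at this
  rw [show (1:ℝ)/(↑n+1) - 1/(↑n+1+↑m) = 1/(↑n+(0+1)) - 1/(↑n+(↑m+1)) by ring_nf, ← this]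
  congr 1 with i
  push_cast
  ring_nf

lemma sumS (s : ℕ) (hs : 2 ≤ s) : Summable (fun n : ℕ => 1/((n:ℝ)+1)^s) := by
  have := (Real.summable_one_div_nat_pow.2 hs)
  have h2 := (summable_nat_add_iff (f := fun n : ℕ => 1/(n:ℝ)^s) 1).2 this
  convert h2 using 2 with n
  · rfl
  push_cast
  ring_nf

lemma sumZ (s : ℕ) (hs : 2 ≤ s) : HasSum (fun n : ℕ => 1/((n:ℝ)+1)^s) (zetaS s) :=
  (sumS s hs).hasSum

lemma sumT (m p : ℕ) (hp : 1 ≤ p) :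
    Summable (fun n : ℕ => 1/(((n:ℝ)+1)^p * ((n:ℝ)+1+m))) := by
  apply Summable.of_nonneg_of_le (fun n => by positivity) ?_ (sumS 2 le_rfl)
  intro n
  apply one_div_le_one_div_of_le (by positivity)
  have h1 : ((n:ℝ)+1) ≤ ((n:ℝ)+1)^p := le_self_pow₀ (by linarith [Nat.cast_nonneg (α := ℝ) n]) (by omega)
  have h2 : ((n:ℝ)+1) ≤ ((n:ℝ)+1+m) := by simp [Nat.cast_nonneg]
  calc ((n:ℝ)+1)^2 = ((n:ℝ)+1) * ((n:ℝ)+1) := by ring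
  _ ≤ ((n:ℝ)+1)^p * ((n:ℝ)+1+m) := by
      apply mul_le_mul h1 h2 (by positivity) (by positivity)

lemma key (m : ℕ) (hm : 1 ≤ m) : ∀ p : ℕ, 1 ≤ p →
    HasSum (fun n : ℕ => 1/(((n:ℝ)+1)^p * ((n:ℝ)+1+m)))
      ((∑ i ∈ Finset.range (p-1), (-1:ℝ)^i * zetaS (p-i)/(m:ℝ)^(i+1))
        + (-1:ℝ)^(p-1) * H m 1/(m:ℝ)^p) := by
  have hm0 : (0:ℝ) < (m:ℝ) := by exact_mod_cast hm
  intro p hp1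
  induction p, hp1 using Nat.le_induction with
  | base =>
    simp only [Nat.sub_self, Finset.range_zero, Finset.sum_empty, zero_add, pow_zero,
      pow_one, one_mul]
    have := (teleB m).div_const (m:ℝ)
    convert this using 2 with n
    · rfl
    have hn : (0:ℝ) < (n:ℝ)+1 := by positivity
    have hnm : (0:ℝ) < (n:ℝ)+1+m := by positivity
    field_simp
    ring
  | succ p hp ih =>
    have hz := sumZ (p+1) (by omega)
    have hsum := ((hz.sub ih).div_const (m:ℝ))
    have hfun : (fun n : ℕ => (1/((n:ℝ)+1)^(p+1) - 1/(((n:ℝ)+1)^p * ((n:ℝ)+1+m)))/(m:ℝ))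
        = fun n : ℕ => 1/(((n:ℝ)+1)^(p+1) * ((n:ℝ)+1+m)) := by
      funext n
      have hn : (0:ℝ) < (n:ℝ)+1 := by positivity
      have hnm : (0:ℝ) < (n:ℝ)+1+m := by positivity
      field_simp
      ring
    rw [hfun] at hsum
    convert hsum using 1
    · rfl
    -- algebra on the finite sums
    have hsplit : ∑ i ∈ Finset.range (p+1-1), (-1:ℝ)^i * zetaS (p+1-i)/(m:ℝ)^(i+1)
        = (∑ i ∈ Finset.range (p-1), (-1:ℝ)^(i+1) * zetaS (p-i)/(m:ℝ)^(i+2))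
          + zetaS (p+1)/(m:ℝ) := by
      rw [show p+1-1 = (p-1)+1 by omega, Finset.sum_range_succ']
      congr 1
      · apply Finset.sum_congr rfl
        intro i hi
        rw [Finset.mem_range] at hi
        rw [show p+1-(i+1) = p-i by omega]
      · simp
    rw [hsplit]
    have hA : ∑ i ∈ Finset.range (p-1), (-1:ℝ)^(i+1) * zetaS (p-i)/(m:ℝ)^(i+2)
        = (-∑ i ∈ Finset.range (p-1), (-1:ℝ)^i * zetaS (p-i)/(m:ℝ)^(i+1))/(m:ℝ) := by
      rw [← Finset.sum_neg_distrib, Finset.sum_div]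
      apply Finset.sum_congr rfl
      intro i _
      rw [neg_div, ← neg_div, pow_succ (-1:ℝ) i, pow_succ (m:ℝ) (i+1)]
      field_simp
    have hH : (-1:ℝ)^p = -(-1:ℝ)^(p-1) := by
      rw [show p = (p-1)+1 by omega, pow_succ]
      rw [show p-1+1-1 = p-1 by omega]
      ring
    rw [hA, show p+1-1 = p by omega, hH, pow_succ (m:ℝ) p]
    field_simp
    ring


theorem stmt4 (p m : ℕ) (hp : 2 ≤ p) (hm : 1 ≤ m) :
    ∫ x in (0:ℝ)..1, x ^ (m - 1) * Li p x
      = (∑ k ∈ Finset.Icc 1 (p - 1), (-1 : ℝ) ^ (k - 1) * zetaS (p - k + 1) / (m : ℝ) ^ k)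
        + (-1 : ℝ) ^ (p - 1) * H m 1 / (m : ℝ) ^ p := by
  set F : ℕ → ℝ → ℝ := fun k x => x^(m-1) * (x^(k+1)/((k:ℝ)+1)^p) with hF
  have hcont : ∀ k : ℕ, Continuous (F k) := by
    intro k; apply Continuous.mul (continuous_pow _)
    exact (continuous_pow _).div_const _
  have hInt : ∀ k : ℕ, MeasureTheory.IntegrableOn (F k) (Set.Ioc (0:ℝ) 1) := fun k =>
    (hcont k).integrableOn_Ioc
  have hval : ∀ k : ℕ, ∫ x in Set.Ioc (0:ℝ) 1, F k x
      = 1/(((k:ℝ)+1)^p * ((k:ℝ)+1+m)) := by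
    intro k
    rw [← intervalIntegral.integral_of_le zero_le_one]
    have heq : ∀ x : ℝ, F k x = x^(m+k) * (1/((k:ℝ)+1)^p) := by
      intro x
      rw [hF]
      rw [show m+k = (m-1)+(k+1) by omega, pow_add]
      ring
    simp_rw [heq]
    rw [intervalIntegral.integral_mul_const, integral_pow]
    have hk : ((k:ℝ)+1)^p ≠ 0 := by positivity
    have hmk : ((m:ℝ)+(k:ℝ)+1) ≠ 0 := by positivity
    push_cast
    field_simp
    ring
  have hnorm : ∀ k : ℕ, ∫ x in Set.Ioc (0:ℝ) 1, ‖F k x‖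
      = 1/(((k:ℝ)+1)^p * ((k:ℝ)+1+m)) := by
    intro k
    rw [← hval k]
    apply MeasureTheory.setIntegral_congr_fun measurableSet_Ioc
    intro x hx
    have hx0 : (0:ℝ) ≤ x := le_of_lt hx.1
    show ‖F k x‖ = F k x
    exact Real.norm_of_nonneg (by rw [hF]; positivity)
  have hSum : Summable (fun k : ℕ => ∫ x in Set.Ioc (0:ℝ) 1, ‖F k x‖) := by
    simp_rw [hnorm]
    exact sumT m p (by omega)
  have hkey := key m hm p (by omega)
  have hhs := MeasureTheory.hasSum_integral_of_summable_integral_norm hInt hSum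
  have hLi : ∀ x : ℝ, ∑' k : ℕ, F k x = x^(m-1) * Li p x := by
    intro x
    rw [hF, Li, tsum_mul_left]
  simp_rw [hval, hLi] at hhs
  rw [intervalIntegral.integral_of_le zero_le_one]
  rw [hhs.unique hkey]
  congr 1
  rw [← Finset.Ico_add_one_right_eq_Icc, Finset.sum_Ico_eq_sum_range]
  apply Finset.sum_congr (by congr 1)
  intro i hi
  rw [Finset.mem_range] at hi
  rw [show 1+i-1 = i by omega, show p-(1+i)+1 = p-i by omega, show 1+i = i+1 by omega]
end

section
/- For integers n ≥ 2 and p ≥ 1, n! ∑_{k=1}^∞ H_k^(p)/(k(k+1)···(k+n)) = (n-1) ∫₀¹ (1-x)^(n-2) Li_{p+1}(x) dx. -/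
open scoped BigOperators
open Finset Nat

section Aux
open Filter MeasureTheory

lemma sq_summable : Summable (fun n : ℕ => 1/((n:ℝ)+1)^2) := by
  have := Real.summable_one_div_nat_pow.mpr (le_refl 2)
  have := (summable_nat_add_iff 1).mpr this
  refine this.congr fun n => by push_cast; ring

lemma fe {a b : ℕ} (h : a = b) : ((a ! : ℕ) : ℝ) = ((b ! : ℕ) : ℝ) := by rw [h]

lemma fact_prod (k m : ℕ) :
    (k ! : ℝ) * ∏ i ∈ Finset.range m, ((k:ℝ)+1+i) = ((k+m)! : ℝ) := by
  induction m with
  | zero => simp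
  | succ m ih =>
    rw [Finset.prod_range_succ, ← mul_assoc, ih]
    have : (k+(m+1))! = (k+m+1) * (k+m)! := by
      rw [show k+(m+1) = (k+m)+1 by ring, Nat.factorial_succ]
    rw [this]
    push_cast
    ring

lemma prod_pos' (k m : ℕ) : 0 < ∏ i ∈ Finset.range m, ((k:ℝ)+1+i) := by
  refine Finset.prod_pos fun i _ => by positivity

lemma prod_inv (k m : ℕ) :
    (∏ i ∈ Finset.range m, ((k:ℝ)+1+i))⁻¹ = (k ! : ℝ) / ((k+m)! : ℝ) := by
  have hp := (prod_pos' k m).ne'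
  rw [eq_div_iff (by positivity : (((k+m)! : ℕ) : ℝ) ≠ 0), ← fact_prod k m]
  field_simp

lemma betaNat (b : ℕ) : ∀ a : ℕ, (∫ x in (0:ℝ)..1, x^a * (1-x)^b) = (a ! : ℝ) * (b ! : ℝ) / ((a+b+1)! : ℝ) := by
  induction b with
  | zero =>
    intro a
    simp only [pow_zero, mul_one, Nat.factorial_zero, Nat.cast_one, Nat.add_zero]
    rw [integral_pow]
    have : ((a+1)! : ℝ) = (a+1) * a ! := by
      rw [Nat.factorial_succ]; push_cast; ring
    rw [this]
    have ha : (a ! : ℝ) ≠ 0 := by positivity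
    field_simp
    simp
  | succ b ih =>
    intro a
    have hcont : ∀ c d : ℕ, Continuous (fun x : ℝ => x ^ c * (1-x) ^ d) := by
      intro c d
      exact (continuous_pow c).mul ((continuous_const.sub continuous_id).pow d)
    have key : (∫ x in (0:ℝ)..1, x^a * (1-x)^(b+1))
        = (∫ x in (0:ℝ)..1, x^a * (1-x)^b) - (∫ x in (0:ℝ)..1, x^(a+1) * (1-x)^b) := by
      rw [← intervalIntegral.integral_sub ((hcont a b).intervalIntegrable 0 1)
        ((hcont (a+1) b).intervalIntegrable 0 1)]
      refine intervalIntegral.integral_congr fun x _ => by ring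
    rw [key, ih a, ih (a+1)]
    have e1 : ((a+1)+b+1) = (a+b+1)+1 := by ring
    have e2 : (a+(b+1)+1) = (a+b+1)+1 := by ring
    rw [fe e1, fe e2]
    have h1 : (((a+b+1)+1)! : ℝ) = ((a+b+1)+1) * (a+b+1)! := by
      rw [Nat.factorial_succ]; push_cast; ring
    have h2 : ((a+1)! : ℝ) = (a+1) * a ! := by rw [Nat.factorial_succ]; push_cast; ring
    have h3 : ((b+1)! : ℝ) = (b+1) * b ! := by rw [Nat.factorial_succ]; push_cast; ring
    rw [h1, h2, h3]
    have hab : ((a+b+1)! : ℝ) ≠ 0 := by positivity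
    field_simp
    ring

noncomputable def Fr (n j : ℕ) : ℝ := (j ! : ℝ) / ((j+n)! : ℝ)

lemma Fr_nonneg (n j : ℕ) : 0 ≤ Fr n j := by unfold Fr; positivity

lemma Fr_step (n j : ℕ) : Fr n j - Fr n (j+1) = n * ((j ! : ℝ) / ((j+n+1)! : ℝ)) := by
  unfold Fr
  rw [fe (show (j+1)+n = (j+n)+1 by ring)]
  have h1 : (((j+n)+1)! : ℝ) = ((j+n)+1) * (j+n)! := by rw [Nat.factorial_succ]; push_cast; ring
  have h2 : ((j+1)! : ℝ) = (j+1) * j ! := by rw [Nat.factorial_succ]; push_cast; ring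
  rw [show j+n+1 = (j+n)+1 from rfl, h1, h2]
  have ha : ((j+n)! : ℝ) ≠ 0 := by positivity
  field_simp
  ring

lemma Fr_le (n j : ℕ) (hn : 1 ≤ n) : Fr n j ≤ 1 / ((j:ℝ)+1) := by
  unfold Fr
  have h : ((j+1)! : ℕ) ≤ (j+n)! := Nat.factorial_le (by omega)
  have h2 : ((j+1) * j ! : ℕ) ≤ (j+n)! := by rwa [← Nat.factorial_succ]
  have h2' : (((j:ℝ))+1) * (j ! : ℝ) ≤ ((j+n)! : ℝ) := by exact_mod_cast h2
  rw [div_le_div_iff₀ (by positivity) (by positivity)]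
  linarith

lemma Fr_tendsto (n K : ℕ) (hn : 1 ≤ n) :
    Tendsto (fun N : ℕ => Fr n (K+N)) atTop (nhds 0) := by
  refine squeeze_zero (g := fun N : ℕ => 1/((N:ℝ)+1)) (fun N => Fr_nonneg n _) (fun N => ?_) ?_
  · refine (Fr_le n (K+N) hn).trans ?_
    have h1 : ((N:ℝ)+1) ≤ (((K+N : ℕ) : ℝ)+1) := by push_cast; linarith [Nat.cast_nonneg (α := ℝ) K]
    exact one_div_le_one_div_of_le (by positivity) h1
  · exact tendsto_one_div_add_atTop_nhds_zero_nat

lemma tele0 (n K : ℕ) (hn : 1 ≤ n) :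
    HasSum (fun k : ℕ => Fr n (K+k) - Fr n (K+k+1)) (Fr n K) := by
  have hnn : ∀ k, 0 ≤ Fr n (K+k) - Fr n (K+k+1) := by
    intro k
    rw [Fr_step]
    positivity
  rw [hasSum_iff_tendsto_nat_of_nonneg hnn]
  have hps : ∀ N, ∑ k ∈ Finset.range N, (Fr n (K+k) - Fr n (K+k+1)) = Fr n K - Fr n (K+N) :=
    fun N => Finset.sum_range_sub' (fun k => Fr n (K+k)) N
  simp only [hps]
  have := (Fr_tendsto n K hn).const_sub (Fr n K)
  simpa using this

lemma tele (n K : ℕ) (hn : 1 ≤ n) :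
    HasSum (fun k : ℕ => (((K+k)! : ℕ) : ℝ) / (((K+k+n+1)! : ℕ) : ℝ))
      ((K ! : ℝ) / (((K+n)! : ℕ) * n : ℝ)) := by
  have hn0 : (n:ℝ) ≠ 0 := by positivity
  have h := (tele0 n K hn).div_const n
  have e1 : (fun k : ℕ => (Fr n (K+k) - Fr n (K+k+1))/n)
      = fun k : ℕ => (((K+k)! : ℕ) : ℝ) / (((K+k+n+1)! : ℕ) : ℝ) := by
    funext k
    rw [Fr_step]
    field_simp
  have e2 : Fr n K / n = (K ! : ℝ) / (((K+n)! : ℕ) * n : ℝ) := by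
    unfold Fr; rw [div_div]
  rw [e1, e2] at h
  exact h

lemma teleQ (q K : ℕ) :
    HasSum (fun k : ℕ => (((K+k)! : ℕ) : ℝ) / (((K+k+q+3)! : ℕ) : ℝ))
      ((K ! : ℝ) / (((K+q+2)! : ℕ) * ((q:ℝ)+2))) := by
  have h := tele (q+2) K (by omega)
  have e1 : (fun k : ℕ => (((K+k)! : ℕ) : ℝ) / (((K+k+(q+2)+1)! : ℕ) : ℝ))
      = fun k : ℕ => (((K+k)! : ℕ) : ℝ) / (((K+k+q+3)! : ℕ) : ℝ) := by
    funext k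
    rw [fe (show K+k+(q+2)+1 = K+k+q+3 by omega)]
  have e2 : (K ! : ℝ) / (((K+(q+2))! : ℕ) * ((q+2:ℕ)) : ℝ)
      = (K ! : ℝ) / (((K+q+2)! : ℕ) * ((q:ℝ)+2)) := by
    rw [fe (show K+(q+2) = K+q+2 by omega)]
    push_cast
    ring_nf
  rw [e1, e2] at h
  exact h

/-- `H (m+1) p` as a sum over `range (m+1)`. -/
lemma H_range (m p : ℕ) : H (m+1) p = ∑ i ∈ Finset.range (m+1), 1/((i:ℝ)+1)^p := by
  induction m with
  | zero => simp [H]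
  | succ m ih =>
    unfold H at *
    rw [Finset.sum_range_succ, ← ih, show m+1+1 = (m+1)+1 from rfl,
      Finset.sum_Icc_succ_top (by omega)]
    congr 1
    push_cast
    ring

lemma H_le (m p : ℕ) : H (m+1) p ≤ (m:ℝ)+1 := by
  rw [H_range]
  calc ∑ i ∈ Finset.range (m+1), 1/((i:ℝ)+1)^p
      ≤ ∑ i ∈ Finset.range (m+1), 1 := by
        refine Finset.sum_le_sum fun i _ => ?_
        rw [div_le_one (by positivity)]
        exact one_le_pow₀ (by linarith [Nat.cast_nonneg (α := ℝ) i])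
    _ = (m:ℝ)+1 := by
        rw [Finset.sum_const, Finset.card_range, nsmul_eq_mul, mul_one]
        push_cast
        ring

lemma H_nonneg (m p : ℕ) : 0 ≤ H m p := by
  unfold H
  exact Finset.sum_nonneg fun j _ => by positivity

/-- The summand of the double sum. -/
noncomputable def gAux (q p k i : ℕ) : ℝ :=
  if i ≤ k then (1/((i:ℝ)+1)^p) * ((k ! : ℝ) / ((k+q+3)! : ℝ)) else 0

lemma gAux_nonneg (q p k i : ℕ) : 0 ≤ gAux q p k i := by
  unfold gAux
  split
  · positivity
  · exact le_refl 0

lemma gAux_row_zero (q p k : ℕ) : ∀ i ∉ Finset.range (k+1), gAux q p k i = 0 := by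
  intro i hi
  rw [Finset.mem_range] at hi
  exact if_neg (by omega)

lemma gAux_row_summable (q p k : ℕ) : Summable (fun i => gAux q p k i) :=
  summable_of_ne_finset_zero (gAux_row_zero q p k)

lemma gAux_row_sum (q p k : ℕ) :
    ∑' i, gAux q p k i = H (k+1) p * ((k ! : ℝ) / ((k+q+3)! : ℝ)) := by
  rw [tsum_eq_sum (gAux_row_zero q p k), H_range, Finset.sum_mul]
  refine Finset.sum_congr rfl fun i hi => ?_
  rw [Finset.mem_range] at hi
  unfold gAux
  rw [if_pos (by omega)]

lemma c_summable (q : ℕ) : Summable (fun k : ℕ => (k ! : ℝ) / ((k+q+3)! : ℝ)) := by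
  have h := (teleQ q 0).summable
  refine h.congr fun k => ?_
  rw [fe (show 0+k = k by omega), fe (show 0+k+q+3 = k+q+3 by omega)]

lemma gAux_rowsum_summable (q p : ℕ) : Summable (fun k => ∑' i, gAux q p k i) := by
  simp only [gAux_row_sum]
  refine Summable.of_nonneg_of_le (fun k => ?_) (fun k => ?_) sq_summable
  · exact mul_nonneg (H_nonneg _ _) (by positivity)
  · -- H (k+1) p * (k!/(k+q+3)!) ≤ 1/(k+1)^2
    have hH := H_le k p
    have hc : (k ! : ℝ) / ((k+q+3)! : ℝ) ≤ 1/((k:ℝ)+1)^3 := by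
      have h1 : ((k+1)^3 * k ! : ℕ) ≤ (k+3)! := by
        have e : (k+3)! = (k+3)*((k+2)*((k+1)*k !)) := by
          rw [show k+3 = (k+2)+1 from rfl, Nat.factorial_succ,
            show k+2 = (k+1)+1 from rfl, Nat.factorial_succ,
            show k+1 = k+1 from rfl, Nat.factorial_succ]
        rw [e]
        have : (k+1)^3 ≤ (k+3)*((k+2)*(k+1)) := by nlinarith
        calc (k+1)^3 * k ! ≤ ((k+3)*((k+2)*(k+1))) * k ! := Nat.mul_le_mul_right _ this
          _ = (k+3)*((k+2)*((k+1)*k !)) := by ring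
      have h2 : ((k+3)! : ℕ) ≤ (k+q+3)! := Nat.factorial_le (by omega)
      have h3 : ((k+1)^3 * k ! : ℕ) ≤ (k+q+3)! := le_trans h1 h2
      have h3' : (((k:ℝ)+1)^3 * (k ! : ℝ)) ≤ ((k+q+3)! : ℝ) := by exact_mod_cast h3
      rw [div_le_div_iff₀ (by positivity) (by positivity)]
      linarith
    calc H (k+1) p * ((k ! : ℝ) / ((k+q+3)! : ℝ))
        ≤ ((k:ℝ)+1) * (1/((k:ℝ)+1)^3) :=
          mul_le_mul hH hc (by positivity) (by positivity)
      _ = 1/((k:ℝ)+1)^2 := by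
          field_simp

lemma gAux_summable (q p : ℕ) : Summable (fun kj : ℕ × ℕ => gAux q p kj.1 kj.2) := by
  refine (summable_prod_of_nonneg (fun kj => gAux_nonneg q p kj.1 kj.2)).mpr
    ⟨fun k => gAux_row_summable q p k, gAux_rowsum_summable q p⟩

lemma gAux_col_summable (q p i : ℕ) : Summable (fun k => gAux q p k i) := by
  refine Summable.of_nonneg_of_le (fun k => gAux_nonneg q p k i) (fun k => ?_) (c_summable q)
  unfold gAux
  split
  · have h1 : 1/((i:ℝ)+1)^p ≤ 1 := by
      rw [div_le_one (by positivity)]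
      exact one_le_pow₀ (by linarith [Nat.cast_nonneg (α := ℝ) i])
    calc (1/((i:ℝ)+1)^p) * ((k ! : ℝ) / ((k+q+3)! : ℝ))
        ≤ 1 * ((k ! : ℝ) / ((k+q+3)! : ℝ)) := by
          exact mul_le_mul_of_nonneg_right h1 (by positivity)
      _ = (k ! : ℝ) / ((k+q+3)! : ℝ) := one_mul _
  · positivity

lemma gAux_col_sum (q p i : ℕ) :
    ∑' k, gAux q p k i = (1/((i:ℝ)+1)^p) * ((i ! : ℝ) / (((i+q+2)! : ℕ) * ((q:ℝ)+2))) := by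
  have h0 := Summable.sum_add_tsum_nat_add (f := fun k => gAux q p k i) i (gAux_col_summable q p i)
  have hz : ∑ k ∈ Finset.range i, gAux q p k i = 0 := by
    refine Finset.sum_eq_zero fun k hk => ?_
    rw [Finset.mem_range] at hk
    exact if_neg (by omega)
  rw [hz, zero_add] at h0
  rw [← h0]
  have hshift : ∀ k : ℕ, gAux q p (k+i) i
      = (1/((i:ℝ)+1)^p) * ((((i+k)! : ℕ) : ℝ)/(((i+k+q+3)! : ℕ) : ℝ)) := by
    intro k
    unfold gAux
    rw [if_pos (by omega), fe (show k+i = i+k by omega), fe (show k+i+q+3 = i+k+q+3 by omega)]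
  rw [tsum_congr hshift, tsum_mul_left, (teleQ q i).tsum_eq]

lemma lhs_sum (q p : ℕ) :
    ∑' k : ℕ, H (k+1) p / ∏ i ∈ Finset.range (q+3), (((k:ℝ)+1)+i)
    = ∑' i : ℕ, (1/((i:ℝ)+1)^p) * ((i ! : ℝ) / (((i+q+2)! : ℕ) * ((q:ℝ)+2))) := by
  have hterm : ∀ k : ℕ, H (k+1) p / ∏ i ∈ Finset.range (q+3), (((k:ℝ)+1)+i)
      = ∑' i, gAux q p k i := by
    intro k
    rw [gAux_row_sum, div_eq_mul_inv, prod_inv, fe (show k+(q+3) = k+q+3 by omega)]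
  have hswap := Summable.tsum_comm' (f := fun k i => gAux q p k i)
    (gAux_summable q p) (gAux_row_summable q p) (gAux_col_summable q p)
  rw [tsum_congr hterm, ← hswap]
  exact tsum_congr (gAux_col_sum q p)

lemma rhs_int (q p : ℕ) (hp : 1 ≤ p) :
    (∫ x in (0:ℝ)..1, (1-x)^q * Li (p+1) x)
    = ∑' m : ℕ, (1/((m:ℝ)+1)^(p+1)) * (((m+1)! : ℝ) * (q ! : ℝ) / (((m+q+2)! : ℕ) : ℝ)) := by
  set F : ℕ → ℝ → ℝ := fun m x => (1-x)^q * (x^(m+1) / ((m:ℝ)+1)^(p+1)) with hF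
  have hcont : ∀ m, Continuous (F m) := by
    intro m
    exact ((continuous_const.sub continuous_id).pow q).mul
      ((continuous_pow (m+1)).div_const _)
  have hint : ∀ m, MeasureTheory.IntegrableOn (F m) (Set.Ioc (0:ℝ) 1) := fun m =>
    (intervalIntegrable_iff_integrableOn_Ioc_of_le zero_le_one).mp
      ((hcont m).intervalIntegrable 0 1)
  have hptwise : ∀ m, ∀ x ∈ Set.Ioc (0:ℝ) 1, ‖F m x‖ ≤ 1/((m:ℝ)+1)^2 := by
    intro m x hx
    obtain ⟨hx0, hx1⟩ := hx
    have h1x : (0:ℝ) ≤ 1 - x := by linarith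
    have hFnn : 0 ≤ F m x := by
      rw [hF]
      positivity
    rw [Real.norm_of_nonneg hFnn, hF]
    have h1 : (1-x)^q ≤ 1 := pow_le_one₀ h1x (by linarith)
    have h2 : x^(m+1) ≤ 1 := pow_le_one₀ (le_of_lt hx0) hx1
    have h3 : ((m:ℝ)+1)^2 ≤ ((m:ℝ)+1)^(p+1) :=
      pow_le_pow_right₀ (by linarith [Nat.cast_nonneg (α := ℝ) m]) (by omega)
    have h4 : x^(m+1) / ((m:ℝ)+1)^(p+1) ≤ 1/((m:ℝ)+1)^2 := by
      rw [div_le_div_iff₀ (by positivity) (by positivity)]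
      calc x^(m+1) * ((m:ℝ)+1)^2 ≤ 1 * ((m:ℝ)+1)^(p+1) := by
            exact mul_le_mul h2 h3 (by positivity) (by norm_num)
        _ = 1 * ((m:ℝ)+1)^(p+1) := rfl
      
    calc (1-x)^q * (x^(m+1) / ((m:ℝ)+1)^(p+1))
        ≤ 1 * (x^(m+1) / ((m:ℝ)+1)^(p+1)) := by
          exact mul_le_mul_of_nonneg_right h1 (by positivity)
      _ = x^(m+1) / ((m:ℝ)+1)^(p+1) := one_mul _
      _ ≤ 1/((m:ℝ)+1)^2 := h4
  have hconst : ∀ m : ℕ, MeasureTheory.IntegrableOn (fun _ : ℝ => 1/((m:ℝ)+1)^2)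
      (Set.Ioc (0:ℝ) 1) := by
    intro m
    exact MeasureTheory.integrableOn_const measure_Ioc_lt_top.ne
  have hbound : ∀ m, (∫ x in Set.Ioc (0:ℝ) 1, ‖F m x‖) ≤ 1/((m:ℝ)+1)^2 := by
    intro m
    calc (∫ x in Set.Ioc (0:ℝ) 1, ‖F m x‖)
        ≤ ∫ _x in Set.Ioc (0:ℝ) 1, 1/((m:ℝ)+1)^2 :=
          MeasureTheory.setIntegral_mono_on (hint m).norm (hconst m)
            measurableSet_Ioc (hptwise m)
      _ = 1/((m:ℝ)+1)^2 := by
          rw [MeasureTheory.setIntegral_const, Real.volume_real_Ioc]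
          simp
  have hsumnorm : Summable (fun m => ∫ x in Set.Ioc (0:ℝ) 1, ‖F m x‖) := by
    refine Summable.of_nonneg_of_le (fun m => ?_) hbound sq_summable
    exact MeasureTheory.integral_nonneg fun x => norm_nonneg _
  have hinter := MeasureTheory.integral_tsum_of_summable_integral_norm hint hsumnorm
  calc (∫ x in (0:ℝ)..1, (1-x)^q * Li (p+1) x)
      = ∫ x in Set.Ioc (0:ℝ) 1, ∑' m, F m x := by
        rw [intervalIntegral.integral_of_le zero_le_one]
        refine MeasureTheory.setIntegral_congr_fun measurableSet_Ioc fun x _ => ?_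
        rw [hF]
        unfold Li
        exact (tsum_mul_left).symm
    _ = ∑' m, ∫ x in Set.Ioc (0:ℝ) 1, F m x := hinter.symm
    _ = ∑' m : ℕ, (1/((m:ℝ)+1)^(p+1)) * (((m+1)! : ℝ) * (q ! : ℝ) / (((m+q+2)! : ℕ) : ℝ)) := by
        refine tsum_congr fun m => ?_
        rw [← intervalIntegral.integral_of_le zero_le_one]
        have e : (∫ x in (0:ℝ)..1, F m x)
            = (1/((m:ℝ)+1)^(p+1)) * ∫ x in (0:ℝ)..1, x^(m+1) * (1-x)^q := by
          rw [← intervalIntegral.integral_const_mul]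
          refine intervalIntegral.integral_congr fun x _ => ?_
          rw [hF]
          ring
        rw [e, betaNat q (m+1), fe (show m+1+q+1 = m+q+2 by omega)]

end Aux

theorem stmt7 (n p : ℕ) (hn : 2 ≤ n) (hp : 1 ≤ p) :
    (n ! : ℝ) * ∑' k : ℕ, H (k + 1) p / ∏ i ∈ Finset.range (n + 1), (((k : ℝ) + 1) + i)
      = ((n : ℝ) - 1) * ∫ x in (0:ℝ)..1, (1 - x) ^ (n - 2) * Li (p + 1) x := by
  obtain ⟨q, rfl⟩ : ∃ q, n = q + 2 := ⟨n - 2, by omega⟩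
  rw [show q+2+1 = q+3 from rfl, lhs_sum q p, Nat.add_sub_cancel, rhs_int q p hp,
    ← tsum_mul_left, ← tsum_mul_left]
  refine tsum_congr fun i => ?_
  have hf1 : (((q+2)! : ℕ) : ℝ) = ((q:ℝ)+2)*(((q:ℝ)+1)*(q ! : ℝ)) := by
    rw [show q+2 = (q+1)+1 from rfl, Nat.factorial_succ, Nat.factorial_succ]
    push_cast
    ring
  have hf2 : (((i+1)! : ℕ) : ℝ) = ((i:ℝ)+1)*(i ! : ℝ) := by
    rw [Nat.factorial_succ]
    push_cast
    ring
  have hf3 : ((i:ℝ)+1)^(p+1) = ((i:ℝ)+1)^p*((i:ℝ)+1) := pow_succ _ _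
  have hcast : (((q:ℕ)+2 : ℕ) : ℝ) - 1 = (q:ℝ)+1 := by push_cast; ring
  rw [hf1, hf2, hf3, hcast]
  have h1 : ((i:ℝ)+1)^p ≠ 0 := by positivity
  have h2 : (((i+q+2)! : ℕ) : ℝ) ≠ 0 := by positivity
  have h3 : ((q:ℝ)+2) ≠ 0 := by positivity
  have h4 : ((i:ℝ)+1) ≠ 0 := by positivity
  field_simp
end

section
/- For integers n ≥ 1 and p ≥ 2, n! ∑_{k=1}^∞ 1/(k^p (k+1)(k+2)···(k+n)) = n ∫₀¹ Li_p(x)(1-x)^(n-1) dx. -/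
open scoped BigOperators
open Finset Nat MeasureTheory
open scoped ENNReal NNReal

theorem beta_nat (k b : ℕ) :
    ∫ x in (0:ℝ)..1, x ^ k * (1 - x) ^ b
      = (b ! : ℝ) / ∏ j ∈ Finset.range (b + 1), ((k : ℝ) + 1 + j) := by
  have h := Complex.betaIntegral_eval_nat_add_one_right (u := (k + 1 : ℂ)) (by
    simp; positivity) b
  rw [Complex.betaIntegral] at h
  have e1 : Set.EqOn (fun x : ℝ =>
      (x : ℂ) ^ ((k:ℂ) + 1 - 1) * ((1:ℂ) - x) ^ ((b:ℂ) + 1 - 1))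
      (fun x : ℝ => ((x ^ k * (1 - x) ^ b : ℝ) : ℂ)) (Set.uIcc (0:ℝ) 1) := by
    intro x hx
    push_cast
    rw [add_sub_cancel_right, add_sub_cancel_right, Complex.cpow_natCast,
      Complex.cpow_natCast]
  rw [intervalIntegral.integral_congr e1, intervalIntegral.integral_ofReal] at h
  have h2 : (((b ! : ℝ) / ∏ j ∈ Finset.range (b + 1), ((k : ℝ) + 1 + j) : ℝ) : ℂ)
      = (b ! : ℂ) / ∏ j ∈ Finset.range (b + 1), ((k:ℂ) + 1 + j) := by
    push_cast; ring_nf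
  exact_mod_cast h.trans h2.symm

theorem stmt9 (n p : ℕ) (hn : 1 ≤ n) (hp : 2 ≤ p) :
    (n ! : ℝ) * ∑' k : ℕ,
        1 / (((k : ℝ) + 1) ^ p * ∏ i ∈ Finset.Icc 1 n, (((k : ℝ) + 1) + i))
      = (n : ℝ) * ∫ x in (0:ℝ)..1, Li p x * (1 - x) ^ (n - 1) := by
  set m := n - 1 with hm
  have hnm : m + 1 = n := Nat.succ_pred_eq_of_pos hn
  set f : ℕ → ℝ → ℝ := fun k x => (1/((k:ℝ)+1)^p) * (x^(k+1) * (1-x)^m) with hf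
  -- the product, rewritten
  have hprod : ∀ k : ℕ, ∏ j ∈ Finset.range (m + 1), (((k+1 : ℕ) : ℝ) + 1 + j)
      = ∏ i ∈ Finset.Icc 1 n, (((k : ℝ) + 1) + i) := by
    intro k
    rw [show Finset.Icc 1 n = Finset.Ico 1 (n+1) by rfl,
      Finset.prod_Ico_eq_prod_range]
    rw [show n + 1 - 1 = m + 1 by omega]
    apply Finset.prod_congr rfl
    intro j _
    push_cast
    ring
  have hppos : ∀ k : ℕ, (0:ℝ) < ∏ i ∈ Finset.Icc 1 n, (((k : ℝ) + 1) + i) := by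
    intro k
    apply Finset.prod_pos
    intro i hi
    have : (1:ℝ) ≤ i := by exact_mod_cast (Finset.mem_Icc.1 hi).1
    positivity
  -- each integral
  have hint : ∀ k : ℕ, ∫ x in Set.Ioc (0:ℝ) 1, f k x
      = (1/((k:ℝ)+1)^p) * ((m ! : ℝ) / ∏ i ∈ Finset.Icc 1 n, (((k : ℝ) + 1) + i)) := by
    intro k
    rw [← intervalIntegral.integral_of_le zero_le_one,
      intervalIntegral.integral_const_mul]
    have := beta_nat (k+1) m
    rw [hprod k] at this
    push_cast at this ⊢
    rw [this]
  -- summability of bound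
  have hsum : Summable (fun k : ℕ => 1/((k:ℝ)+1)^p) := by
    have h1 : Summable (fun k : ℕ => 1/((k:ℝ))^p) :=
      Real.summable_one_div_nat_pow.2 (by omega)
    have := (summable_nat_add_iff 1).2 h1
    apply this.congr
    intro k; push_cast; ring_nf
  have hbnd : ∀ k : ℕ, ∫⁻ x in Set.Ioc (0:ℝ) 1, ‖f k x‖₊
      ≤ ENNReal.ofReal (1/((k:ℝ)+1)^p) := by
    intro k
    have hc : (0:ℝ) < ((k:ℝ)+1)^p := by positivity
    calc ∫⁻ x in Set.Ioc (0:ℝ) 1, (‖f k x‖₊ : ℝ≥0∞)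
        ≤ ∫⁻ _ in Set.Ioc (0:ℝ) 1, ENNReal.ofReal (1/((k:ℝ)+1)^p) := by
          apply setLIntegral_mono measurable_const
          intro x hx
          rw [← enorm_eq_nnnorm, ← ofReal_norm]
          apply ENNReal.ofReal_le_ofReal
          rw [Real.norm_eq_abs, hf]
          simp only [abs_mul]
          have h1 : |(1:ℝ)/((k:ℝ)+1)^p| = 1/((k:ℝ)+1)^p := abs_of_pos (by positivity)
          have h2 : |x^(k+1)| ≤ 1 := by
            rw [abs_pow]
            apply pow_le_one₀ (abs_nonneg _)
            rw [abs_of_pos hx.1]; exact hx.2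
          have h3 : |(1-x)^m| ≤ 1 := by
            rw [abs_pow]
            apply pow_le_one₀ (abs_nonneg _)
            rw [abs_of_nonneg (by linarith [hx.2])]; linarith [hx.1]
          rw [h1]
          calc 1/((k:ℝ)+1)^p * (|x^(k+1)| * |(1-x)^m|)
              ≤ 1/((k:ℝ)+1)^p * (1 * 1) := by
                apply mul_le_mul_of_nonneg_left _ (by positivity)
                exact mul_le_mul h2 h3 (abs_nonneg _) zero_le_one
            _ = 1/((k:ℝ)+1)^p := by ring
      _ = ENNReal.ofReal (1/((k:ℝ)+1)^p) := by
          rw [setLIntegral_const]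
          simp [Real.volume_Ioc]
  -- swap
  have hswap : ∫ x in Set.Ioc (0:ℝ) 1, (∑' k : ℕ, f k x)
      = ∑' k : ℕ, ∫ x in Set.Ioc (0:ℝ) 1, f k x := by
    apply integral_tsum
    · intro k
      exact (by fun_prop : Continuous (f k)).aestronglyMeasurable
    · apply ne_top_of_le_ne_top _ (ENNReal.tsum_le_tsum hbnd)
      rw [← ENNReal.ofReal_tsum_of_nonneg (fun k => by positivity) hsum]
      exact ENNReal.ofReal_ne_top
  -- Li expansion
  have hLi : ∀ x : ℝ, Li p x * (1-x)^m = ∑' k : ℕ, f k x := by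
    intro x
    rw [Li, ← tsum_mul_right]
    apply tsum_congr
    intro k
    rw [hf]; ring
  rw [← intervalIntegral.integral_of_le zero_le_one] at hswap
  calc (n ! : ℝ) * ∑' k : ℕ,
        1 / (((k : ℝ) + 1) ^ p * ∏ i ∈ Finset.Icc 1 n, (((k : ℝ) + 1) + i))
      = ∑' k : ℕ, (n:ℝ) * ∫ x in Set.Ioc (0:ℝ) 1, f k x := by
        rw [← tsum_mul_left]
        apply tsum_congr
        intro k
        rw [hint k]
        have hfac : (n:ℝ) * (m ! : ℝ) = (n ! : ℝ) := by
          rw [hm]; exact_mod_cast Nat.mul_factorial_pred (by omega)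
        have hc : ((k:ℝ)+1)^p ≠ 0 := by positivity
        field_simp
        linarith [mul_comm ((n:ℝ)) ((m ! : ℝ))]
    _ = (n : ℝ) * ∫ x in (0:ℝ)..1, Li p x * (1 - x) ^ (n - 1) := by
        rw [tsum_mul_left, ← hswap]
        congr 1
        apply intervalIntegral.integral_congr
        intro x _
        exact (hLi x).symm
end

section
/- For all integers n ≥ 1 and p ≥ 1, δ_n(p) = δ_{n-1}(p) - (1/n) δ_n(p-1), where δ_n(p) = n! ∑_{k=1}^∞ 1/(k^p(k+1)···(k+n)), provided the three series converge (e.g. n + p ≥ 2 for each term). -/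
open scoped BigOperators
open Finset

/-- δ_n(p) = n! ∑_{k≥1} 1/(k^p (k+1)⋯(k+n)). -/
noncomputable def delta (n p : ℕ) : ℝ :=
  (Nat.factorial n : ℝ) * ∑' k : ℕ,
    1 / (((k : ℝ) + 1) ^ p * ∏ i ∈ Finset.Icc 1 n, (((k : ℝ) + 1) + i))

theorem stmt14 (n p : ℕ) (hn : 1 ≤ n) (hp : 1 ≤ p)
    (h1 : Summable fun k : ℕ =>
      1 / (((k : ℝ) + 1) ^ p * ∏ i ∈ Finset.Icc 1 n, (((k : ℝ) + 1) + i)))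
    (h2 : Summable fun k : ℕ =>
      1 / (((k : ℝ) + 1) ^ p * ∏ i ∈ Finset.Icc 1 (n - 1), (((k : ℝ) + 1) + i)))
    (h3 : Summable fun k : ℕ =>
      1 / (((k : ℝ) + 1) ^ (p - 1) * ∏ i ∈ Finset.Icc 1 n, (((k : ℝ) + 1) + i))) :
    delta n p = delta (n - 1) p - (1 / (n : ℝ)) * delta n (p - 1) := by

  obtain ⟨m, rfl⟩ : ∃ m, n = m + 1 := ⟨n - 1, (Nat.succ_pred_eq_of_pos hn).symm⟩
  obtain ⟨q, rfl⟩ : ∃ q, p = q + 1 := ⟨p - 1, (Nat.succ_pred_eq_of_pos hp).symm⟩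
  simp only [Nat.add_sub_cancel] at h2 h3 ⊢
  have key : ∀ k : ℕ,
      (((m+1).factorial : ℝ)) * (1 / (((k:ℝ)+1)^(q+1) * ∏ i ∈ Icc 1 (m+1), (((k:ℝ)+1)+i)))
    = (m.factorial : ℝ) * (1 / (((k:ℝ)+1)^(q+1) * ∏ i ∈ Icc 1 m, (((k:ℝ)+1)+i)))
    - (m.factorial : ℝ) * (1 / (((k:ℝ)+1)^q * ∏ i ∈ Icc 1 (m+1), (((k:ℝ)+1)+i))) := by
    intro k
    set x := (k:ℝ)+1 with hx
    have hx0 : (0:ℝ) < x := by positivity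
    have hPm : (0:ℝ) < ∏ i ∈ Icc 1 m, (x + i) := by
      apply Finset.prod_pos; intro i hi; positivity
    have hprod : ∏ i ∈ Icc 1 (m+1), (x + (i:ℝ)) = (∏ i ∈ Icc 1 m, (x + i)) * (x + (m+1)) := by
      rw [Finset.prod_Icc_succ_top (Nat.le_add_left 1 m)]
      push_cast; ring_nf
    have hfac : (((m+1).factorial : ℝ)) = ((m:ℝ)+1) * m.factorial := by
      rw [Nat.factorial_succ]; push_cast; ring
    have hxm : x + ((m:ℝ)+1) ≠ 0 := by positivity
    rw [hprod, hfac, pow_succ]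
    have e1 : (∏ i ∈ Icc 1 m, (x + (i:ℝ))) ≠ 0 := hPm.ne'
    have e2 : x ≠ 0 := hx0.ne'
    field_simp
    ring
  unfold delta
  push_cast
  have hg := h2.mul_left ((m.factorial : ℝ))
  have hh := h3.mul_left ((m.factorial : ℝ))
  calc (((m+1).factorial : ℝ)) * ∑' k : ℕ,
        1 / (((k:ℝ)+1)^(q+1) * ∏ i ∈ Icc 1 (m+1), (((k:ℝ)+1)+i))
      = ∑' k : ℕ, (((m+1).factorial : ℝ)) *
          (1 / (((k:ℝ)+1)^(q+1) * ∏ i ∈ Icc 1 (m+1), (((k:ℝ)+1)+i))) := tsum_mul_left.symm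
    _ = ∑' k : ℕ, ((m.factorial : ℝ) * (1 / (((k:ℝ)+1)^(q+1) * ∏ i ∈ Icc 1 m, (((k:ℝ)+1)+i)))
          - (m.factorial : ℝ) * (1 / (((k:ℝ)+1)^q * ∏ i ∈ Icc 1 (m+1), (((k:ℝ)+1)+i)))) :=
        tsum_congr key
    _ = (∑' k : ℕ, (m.factorial : ℝ) * (1 / (((k:ℝ)+1)^(q+1) * ∏ i ∈ Icc 1 m, (((k:ℝ)+1)+i))))
          - ∑' k : ℕ, (m.factorial : ℝ) * (1 / (((k:ℝ)+1)^q * ∏ i ∈ Icc 1 (m+1), (((k:ℝ)+1)+i))) :=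
        Summable.tsum_sub hg hh
    _ = (m.factorial : ℝ) * (∑' k : ℕ, 1 / (((k:ℝ)+1)^(q+1) * ∏ i ∈ Icc 1 m, (((k:ℝ)+1)+i)))
          - (1 / ((m:ℝ)+1)) * ((((m+1).factorial : ℝ)) *
            ∑' k : ℕ, 1 / (((k:ℝ)+1)^q * ∏ i ∈ Icc 1 (m+1), (((k:ℝ)+1)+i))) := by
        rw [tsum_mul_left, tsum_mul_left]
        have hfac : (((m+1).factorial : ℝ)) = ((m:ℝ)+1) * m.factorial := by
          rw [Nat.factorial_succ]; push_cast; ring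
        have hm1 : ((m:ℝ)+1) ≠ 0 := by positivity
        rw [hfac]; push_cast; field_simp
end

section
/- For every integer n ≥ 1, n! ∑_{k=1}^∞ 1/(k²(k+1)···(k+n)) = ζ(2) - H_n^(2), where H_n^(2) = ∑_{j=1}^n 1/j². -/
open scoped BigOperators
open Finset

namespace Stmt16Aux

noncomputable def P (n k : ℕ) : ℝ := ∏ i ∈ Finset.Icc 1 n, (((k : ℝ) + 1) + i)

lemma P_pos (n k : ℕ) : 0 < P n k := by
  refine Finset.prod_pos fun i _ => by positivity

lemma P_ge_one (n k : ℕ) : 1 ≤ P n k := by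
  have : (∏ _i ∈ Finset.Icc 1 n, (1 : ℝ)) ≤ P n k := by
    refine Finset.prod_le_prod (fun i _ => by norm_num) (fun i hi => ?_)
    have : (0:ℝ) ≤ (k:ℝ) + i := by positivity
    linarith
  simpa using this

lemma P_succ (n k : ℕ) : P (n+1) k = P n k * (((k:ℝ)+1) + (n+1)) := by
  unfold P
  rw [Finset.prod_Icc_succ_top (show (1:ℕ) ≤ n+1 by omega)]
  push_cast
  ring

lemma P_shift (n k : ℕ) : (((k:ℝ)+1)+1) * P n (k+1) = P (n+1) k := by
  unfold P
  induction n with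
  | zero => simp
  | succ m ih =>
    rw [Finset.prod_Icc_succ_top (show (1:ℕ) ≤ m+1 by omega),
        Finset.prod_Icc_succ_top (show (1:ℕ) ≤ m+2 by omega)]
    push_cast at ih ⊢
    linear_combination ((k:ℝ) + m + 3) * ih

lemma P_zero_left (n : ℕ) : P n 0 = (Nat.factorial (n+1) : ℝ) := by
  induction n with
  | zero => simp [P]
  | succ m ih =>
    rw [P_succ, ih]
    push_cast [Nat.factorial_succ]
    ring

noncomputable def F (n k : ℕ) : ℝ := 1 / (((k : ℝ) + 1) ^ 2 * P n k)

lemma F_nonneg (n k : ℕ) : 0 ≤ F n k := by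
  have := P_pos n k
  unfold F; positivity

lemma summable_base : Summable (fun k : ℕ => 1 / ((k : ℝ) + 1) ^ 2) := by
  have h : Summable (fun k : ℕ => 1 / (k : ℝ) ^ 2) := Real.summable_one_div_nat_pow.mpr (by norm_num)
  have := (summable_nat_add_iff 1).mpr h
  simpa using this

lemma summable_F (n : ℕ) : Summable (F n) := by
  refine Summable.of_nonneg_of_le (F_nonneg n) (fun k => ?_) summable_base
  unfold F
  have h1 := P_ge_one n k
  have h2 : (0:ℝ) < ((k:ℝ)+1)^2 := by positivity
  rw [div_le_div_iff₀ (by nlinarith [P_pos n k]) h2]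
  nlinarith

lemma telescope (f : ℕ → ℝ) (h0 : ∀ k, 0 ≤ f k - f (k+1))
    (hl : Filter.Tendsto f Filter.atTop (nhds 0)) :
    HasSum (fun k => f k - f (k+1)) (f 0) := by
  rw [hasSum_iff_tendsto_nat_of_nonneg h0]
  have : (fun n => ∑ i ∈ Finset.range n, (f i - f (i+1))) = fun n => f 0 - f n := by
    funext n; exact Finset.sum_range_sub' f n
  rw [this]
  simpa using Filter.Tendsto.sub (tendsto_const_nhds (x := f 0)) hl

noncomputable def t (n k : ℕ) : ℝ := 1 / (((k:ℝ)+1) * P n k)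

lemma t_diff (n k : ℕ) :
    t n k - t n (k+1) = ((n:ℝ)+1) * (1 / (((k:ℝ)+1) * P (n+1) k)) := by
  unfold t
  have hA := P_pos n k
  have hk : (0:ℝ) < (k:ℝ)+1 := by positivity
  have hB : P n (k+1) = P n k * (((k:ℝ)+1)+((n:ℝ)+1)) / (((k:ℝ)+1)+1) := by
    have hs := P_shift n k
    rw [P_succ] at hs
    field_simp
    push_cast at hs ⊢
    linarith
  rw [P_succ, hB]
  push_cast
  have h2 : (0:ℝ) < (k:ℝ)+1+((n:ℝ)+1) := by positivity
  field_simp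
  ring

lemma t_tendsto (n : ℕ) : Filter.Tendsto (t n) Filter.atTop (nhds 0) := by
  refine squeeze_zero (fun k => ?_) (fun k => ?_) tendsto_one_div_add_atTop_nhds_zero_nat
  · have := P_pos n k; unfold t; positivity
  · unfold t
    have h1 := P_ge_one n k
    have hk : (0:ℝ) < (k:ℝ)+1 := by positivity
    rw [div_le_div_iff₀ (by nlinarith [P_pos n k]) (by positivity)]
    nlinarith

lemma inner_hasSum (n : ℕ) :
    HasSum (fun k : ℕ => 1 / (((k:ℝ)+1) * P (n+1) k))
      (1 / (((n:ℝ)+1) * (Nat.factorial (n+1) : ℝ))) := by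
  have hpos : (0:ℝ) < (n:ℝ)+1 := by positivity
  have htel : HasSum (fun k => t n k - t n (k+1)) (t n 0) := by
    refine telescope _ (fun k => ?_) (t_tendsto n)
    rw [t_diff]
    have := P_pos (n+1) k
    positivity
  have h0 : t n 0 = 1 / (Nat.factorial (n+1) : ℝ) := by
    unfold t; rw [P_zero_left]; norm_num
  rw [h0] at htel
  have h2 : HasSum (fun k : ℕ => ((n:ℝ)+1) * (1 / (((k:ℝ)+1) * P (n+1) k)))
      (1 / (Nat.factorial (n+1) : ℝ)) := htel.congr_fun (fun k => (t_diff n k).symm)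
  have h3 := h2.mul_left (((n:ℝ)+1)⁻¹)
  have heq : (fun k : ℕ => ((n:ℝ)+1)⁻¹ * (((n:ℝ)+1) * (1 / (((k:ℝ)+1) * P (n+1) k))))
      = fun k : ℕ => 1 / (((k:ℝ)+1) * P (n+1) k) := by
    funext k
    field_simp
  rw [heq] at h3
  have e : 1 / (((n:ℝ)+1) * (Nat.factorial (n+1) : ℝ))
      = ((n:ℝ)+1)⁻¹ * (1 / (Nat.factorial (n+1) : ℝ)) := by
    rw [one_div, mul_inv, ← one_div]
    ring
  rw [e]; exact h3

lemma summable_inner (n : ℕ) : Summable (fun k : ℕ => 1 / (((k:ℝ)+1) * P (n+1) k)) :=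
  (inner_hasSum n).summable

lemma main (n : ℕ) : (Nat.factorial n : ℝ) * ∑' k, F n k = zetaS 2 - H n 2 := by
  induction n with
  | zero => simp [F, P, zetaS, H]
  | succ m ih =>
    have key : ∀ k : ℕ, (Nat.factorial (m+1) : ℝ) * F (m+1) k
        = (Nat.factorial m : ℝ) * F m k
          - (Nat.factorial m : ℝ) * (1 / (((k:ℝ)+1) * P (m+1) k)) := by
      intro k
      unfold F
      rw [P_succ]
      have hA := P_pos m k
      have hk : (0:ℝ) < (k:ℝ)+1 := by positivity
      have h2 : (0:ℝ) < (k:ℝ)+1+((m:ℝ)+1) := by positivity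
      push_cast [Nat.factorial_succ]
      field_simp
      ring
    have hs1 := (summable_F m).mul_left (Nat.factorial m : ℝ)
    have hs2 := (summable_inner m).mul_left (Nat.factorial m : ℝ)
    calc (Nat.factorial (m+1) : ℝ) * ∑' k, F (m+1) k
        = ∑' k, (Nat.factorial (m+1) : ℝ) * F (m+1) k := (tsum_mul_left).symm
      _ = ∑' k : ℕ, ((Nat.factorial m : ℝ) * F m k
            - (Nat.factorial m : ℝ) * (1 / (((k:ℝ)+1) * P (m+1) k))) := tsum_congr key
      _ = (Nat.factorial m : ℝ) * ∑' k, F m k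
            - (Nat.factorial m : ℝ) * ∑' k : ℕ, (1/(((k:ℝ)+1) * P (m+1) k)) := by
          rw [Summable.tsum_sub hs1 hs2, tsum_mul_left, tsum_mul_left]
      _ = zetaS 2 - H m 2
            - (Nat.factorial m : ℝ) * (1 / (((m:ℝ)+1) * (Nat.factorial (m+1) : ℝ))) := by
          rw [ih, (inner_hasSum m).tsum_eq]
      _ = zetaS 2 - H (m+1) 2 := by
          have hH : H (m+1) 2 = H m 2 + 1/((m:ℝ)+1)^2 := by
            unfold H
            rw [Finset.sum_Icc_succ_top (show (1:ℕ) ≤ m+1 by omega)]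
            push_cast; ring
          rw [hH]
          have hm : (0:ℝ) < (m:ℝ)+1 := by positivity
          have hf : (0:ℝ) < (Nat.factorial m : ℝ) := by exact_mod_cast Nat.factorial_pos m
          push_cast [Nat.factorial_succ]
          field_simp
          ring

end Stmt16Aux

theorem stmt16 (n : ℕ) (hn : 1 ≤ n) :
    (Nat.factorial n : ℝ) * ∑' k : ℕ,
        1 / (((k : ℝ) + 1) ^ 2 * ∏ i ∈ Finset.Icc 1 n, (((k : ℝ) + 1) + i))
      = zetaS 2 - H n 2 := by
  simpa [Stmt16Aux.F, Stmt16Aux.P] using Stmt16Aux.main n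
end

section
/- For every integer n ≥ 1, n! ∑_{k=1}^∞ 1/(k³(k+1)···(k+n)) = ζ(3) - ζ(2) H_n + ∑_{k=1}^n H_k^(2)/k. -/
open scoped BigOperators
open Finset

/-! Auxiliary development -/

noncomputable def PP (n k : ℕ) : ℝ := ∏ i ∈ Finset.Icc 1 n, (((k : ℝ) + 1) + i)
noncomputable def QQ (n k : ℕ) : ℝ := ∏ i ∈ Finset.Icc 1 n, ((k : ℝ) + i)

lemma PP_pos (n k : ℕ) : 0 < PP n k :=
  Finset.prod_pos fun i hi => by
    have : (1 : ℕ) ≤ i := (Finset.mem_Icc.1 hi).1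
    positivity

lemma QQ_pos (n k : ℕ) : 0 < QQ n k :=
  Finset.prod_pos fun i hi => by
    have : (1 : ℕ) ≤ i := (Finset.mem_Icc.1 hi).1
    have : (1 : ℝ) ≤ (i : ℝ) := by exact_mod_cast this
    positivity

lemma PP_succ (n k : ℕ) : PP (n + 1) k = PP n k * (((k : ℝ) + 1) + (n + 1)) := by
  rw [PP, PP, Finset.prod_Icc_succ_top (by omega)]
  push_cast; ring

lemma QQ_succ (n k : ℕ) : QQ (n + 1) k = QQ n k * ((k : ℝ) + (n + 1)) := by
  rw [QQ, QQ, Finset.prod_Icc_succ_top (by omega)]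
  push_cast; ring

lemma QQ_shift (n k : ℕ) : QQ (n + 1) k = ((k : ℝ) + 1) * PP n k := by
  induction n with
  | zero => simp [QQ, PP]
  | succ m ih => rw [QQ_succ, ih, PP_succ]; push_cast; ring

lemma QQ_cast_succ (n k : ℕ) : QQ n (k + 1) = PP n k := by
  rw [QQ, PP]
  refine Finset.prod_congr rfl fun i _ => by push_cast; ring

lemma QQ_zero_left (n : ℕ) : QQ n 0 = (Nat.factorial n : ℝ) := by
  rw [QQ]
  simp only [Nat.cast_zero, zero_add]
  have : Finset.Icc 1 n = Finset.Ico 1 (n + 1) := by rw [Finset.Ico_add_one_right_eq_Icc]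
  rw [this, ← Finset.prod_Ico_id_eq_factorial n]
  push_cast
  rfl

noncomputable def aa (n k : ℕ) : ℝ := (Nat.factorial n : ℝ) / (((k : ℝ) + 1) ^ 3 * PP n k)
noncomputable def bb (n k : ℕ) : ℝ := (Nat.factorial n : ℝ) / (((k : ℝ) + 1) ^ 2 * PP n k)
noncomputable def cc (n k : ℕ) : ℝ := (Nat.factorial n : ℝ) / (((k : ℝ) + 1) * PP n k)
noncomputable def dd (n k : ℕ) : ℝ := (Nat.factorial n : ℝ) / QQ n k

lemma cc_nonneg (n k : ℕ) : 0 ≤ cc n k := by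
  have := PP_pos n k
  unfold cc; positivity

lemma cc_telescope (n k : ℕ) : dd n k - dd n (k + 1) = (n : ℝ) * cc n k := by
  have h1 : QQ n k * ((k : ℝ) + (n + 1)) = ((k : ℝ) + 1) * PP n k := by
    rw [← QQ_succ, QQ_shift]
  rw [dd, dd, cc, QQ_cast_succ]
  have hq := QQ_pos n k
  have hp := PP_pos n k
  have hk : ((k : ℝ) + 1) ≠ 0 := by positivity
  field_simp
  linear_combination -h1

lemma dd_zero (n : ℕ) : dd n 0 = 1 := by
  rw [dd, QQ_zero_left]
  have : (Nat.factorial n : ℝ) ≠ 0 := by positivity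
  field_simp

lemma dd_tendsto (n : ℕ) (hn : 1 ≤ n) :
    Filter.Tendsto (fun k => dd n k) Filter.atTop (nhds 0) := by
  have hub : ∀ k, dd n k ≤ (Nat.factorial n : ℝ) * (1 / ((k : ℝ) + 1)) := by
    intro k
    have h1 : ((k : ℝ) + 1) ≤ QQ n k := by
      induction n, hn using Nat.le_induction with
      | base => simp [QQ]
      | succ m hm ih =>
        rw [QQ_succ]
        have hq := QQ_pos m k
        have hk : (0 : ℝ) ≤ (k : ℝ) := Nat.cast_nonneg k
        have hm1 : (1 : ℝ) ≤ (k : ℝ) + (m + 1) := by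
          have : (0 : ℝ) ≤ (k : ℝ) + m := by positivity
          linarith
        nlinarith
    have hk : (0 : ℝ) < (k : ℝ) + 1 := by positivity
    rw [dd, mul_one_div]
    exact div_le_div_of_nonneg_left (by positivity) hk h1
  have hlb : ∀ k, 0 ≤ dd n k := fun k => by
    have := QQ_pos n k; unfold dd; positivity
  have : Filter.Tendsto (fun k : ℕ => (Nat.factorial n : ℝ) * (1 / ((k : ℝ) + 1)))
      Filter.atTop (nhds ((Nat.factorial n : ℝ) * 0)) :=
    Filter.Tendsto.const_mul _ tendsto_one_div_add_atTop_nhds_zero_nat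
  rw [mul_zero] at this
  exact squeeze_zero hlb hub this

lemma hasSum_cc (n : ℕ) (hn : 1 ≤ n) : HasSum (cc n) (1 / n) := by
  rw [hasSum_iff_tendsto_nat_of_nonneg (cc_nonneg n)]
  have key : ∀ N, ∑ k ∈ Finset.range N, cc n k = (1 - dd n N) / n := by
    intro N
    have hne : (n : ℝ) ≠ 0 := by positivity
    have : ∀ k, cc n k = (dd n k - dd n (k + 1)) / n := by
      intro k
      rw [cc_telescope]
      field_simp
    calc ∑ k ∈ Finset.range N, cc n k
        = (∑ k ∈ Finset.range N, (dd n k - dd n (k + 1))) / n := by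
          rw [Finset.sum_div]; exact Finset.sum_congr rfl fun k _ => this k
      _ = (dd n 0 - dd n N) / n := by rw [Finset.sum_range_sub' (dd n)]
      _ = (1 - dd n N) / n := by rw [dd_zero]
  simp only [key]
  have : Filter.Tendsto (fun N : ℕ => (1 - dd n N) / n) Filter.atTop (nhds ((1 - 0) / n)) :=
    (Filter.Tendsto.const_sub _ (dd_tendsto n hn)).div_const _
  simpa using this

lemma bb_rec (n k : ℕ) : bb (n + 1) k = bb n k - cc (n + 1) k / (n + 1) := by
  rw [bb, bb, cc, PP_succ, Nat.factorial_succ]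
  have hp := PP_pos n k
  have hk : (0 : ℝ) < (k : ℝ) + 1 := by positivity
  have hm : (0 : ℝ) < ((k : ℝ) + 1) + (n + 1) := by positivity
  push_cast
  field_simp
  ring

lemma aa_rec (n k : ℕ) : aa (n + 1) k = aa n k - bb (n + 1) k / (n + 1) := by
  rw [aa, aa, bb, PP_succ, Nat.factorial_succ]
  have hp := PP_pos n k
  have hk : (0 : ℝ) < (k : ℝ) + 1 := by positivity
  have hm : (0 : ℝ) < ((k : ℝ) + 1) + (n + 1) := by positivity
  push_cast
  field_simp
  ring

lemma H_succ (n p : ℕ) : H (n + 1) p = H n p + 1 / ((n : ℝ) + 1) ^ p := by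
  rw [H, H, Finset.sum_Icc_succ_top (by omega)]
  push_cast; ring

lemma summable_shift (p : ℕ) (hp : 2 ≤ p) : Summable (fun k : ℕ => 1 / ((k : ℝ) + 1) ^ p) := by
  have h : Summable (fun k : ℕ => 1 / (k : ℝ) ^ p) :=
    (Real.summable_one_div_nat_pow).2 hp
  have := (summable_nat_add_iff 1).2 h
  refine this.congr fun k => ?_
  push_cast; ring

lemma hasSum_bb (n : ℕ) : HasSum (bb n) (zetaS 2 - H n 2) := by
  induction n with
  | zero =>
    have hs : Summable (fun k : ℕ => 1 / ((k : ℝ) + 1) ^ 2) := summable_shift 2 le_rfl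
    have : HasSum (fun k : ℕ => 1 / ((k : ℝ) + 1) ^ 2) (zetaS 2) := hs.hasSum
    have heq : bb 0 = fun k : ℕ => 1 / ((k : ℝ) + 1) ^ 2 := by
      funext k; rw [bb, PP]; simp
    rw [heq]
    simpa [H] using this
  | succ m ih =>
    have hc := (hasSum_cc (m + 1) (by omega)).div_const ((m : ℝ) + 1)
    have := ih.sub hc
    have heq : (fun k => bb m k - cc (m + 1) k / ((m : ℝ) + 1)) = bb (m + 1) := by
      funext k; rw [bb_rec]
    rw [heq] at this
    convert this using 1
    · rfl
    rw [H_succ]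
    push_cast
    field_simp
    ring

lemma hasSum_aa (n : ℕ) :
    HasSum (aa n) (zetaS 3 - zetaS 2 * H n 1 + ∑ k ∈ Finset.Icc 1 n, H k 2 / (k : ℝ)) := by
  induction n with
  | zero =>
    have hs : Summable (fun k : ℕ => 1 / ((k : ℝ) + 1) ^ 3) := summable_shift 3 (by omega)
    have : HasSum (fun k : ℕ => 1 / ((k : ℝ) + 1) ^ 3) (zetaS 3) := hs.hasSum
    have heq : aa 0 = fun k : ℕ => 1 / ((k : ℝ) + 1) ^ 3 := by
      funext k; rw [aa, PP]; simp
    rw [heq]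
    simpa [H] using this
  | succ m ih =>
    have hb := (hasSum_bb (m + 1)).div_const ((m : ℝ) + 1)
    have := ih.sub hb
    have heq : (fun k => aa m k - bb (m + 1) k / ((m : ℝ) + 1)) = aa (m + 1) := by
      funext k; rw [aa_rec]
    rw [heq] at this
    convert this using 1
    · rfl
    rw [H_succ, Finset.sum_Icc_succ_top (by omega : 1 ≤ m + 1)]
    push_cast
    ring

theorem stmt17 (n : ℕ) (hn : 1 ≤ n) :
    (Nat.factorial n : ℝ) * ∑' k : ℕ,
        1 / (((k : ℝ) + 1) ^ 3 * ∏ i ∈ Finset.Icc 1 n, (((k : ℝ) + 1) + i))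
      = zetaS 3 - zetaS 2 * H n 1 + ∑ k ∈ Finset.Icc 1 n, H k 2 / (k : ℝ) := by
  rw [← tsum_mul_left]
  have heq : (fun k : ℕ => (Nat.factorial n : ℝ) *
      (1 / (((k : ℝ) + 1) ^ 3 * ∏ i ∈ Finset.Icc 1 n, (((k : ℝ) + 1) + i)))) = aa n := by
    funext k; rw [aa, PP, mul_one_div]
  rw [heq]
  exact (hasSum_aa n).tsum_eq
end
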